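/- arXiv:1601.06316 — 2 statements merged into one kernel-verified Lean document; each statement's English description precedes it below -/
import Mathlib

section
/- Let n ≥ 1, let a_1, …, a_n be nonzero real numbers and Δ ≠ 0 a real number. Define the symmetric tridiagonal n × n real matrix M by M_{ii} = 1/(Δ²·a_i²), M_{i,i+1} = M_{i+1,i} = −1/(2·Δ²·a_i·a_{i+1}), and M_{ij} = 0 whenever |i − j| ≥ 2. Then M is positive definite: xᵀMx > 0 for every nonzero x ∈ ℝⁿ. -/
/-!
With `y i = x i / (Δ a i)` the quadratic form is
`2 xᵀMx = y₁² + ∑ (yᵢ₊₁ - yᵢ)² + yₙ²`, i.e. `2 M = (B D)ᵀ (B D)` where `D` is the diagonal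
matrix of the `1 / (Δ aᵢ)` and `B` is the `(n + 1) × n` difference matrix. Both `D` and `B` are
injective, so `M` is a positive multiple of a Gram matrix of full rank.
-/

open Matrix

/-- `diffMatrix n *ᵥ z` lists the differences `z k - z (k - 1)`, `k = 0, …, n`, of `z` extended
by `z (-1) = z n = 0`. -/
def diffMatrix (n : ℕ) : Matrix (Fin (n + 1)) (Fin n) ℝ :=
  of fun k i => (if k = i.castSucc then 1 else 0) - (if k = i.succ then 1 else 0)

theorem diffMatrix_conjTranspose_mul_self_apply {n : ℕ} (i j : Fin n) :
    ((diffMatrix n)ᴴ * diffMatrix n) i j =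
      if i = j then 2 else if (i : ℕ) + 1 = j ∨ (j : ℕ) + 1 = i then -1 else 0 := by
  simp only [diffMatrix, mul_apply, conjTranspose_apply, of_apply, star_trivial, mul_sub, sub_mul,
    ite_mul, one_mul, zero_mul, Finset.sum_sub_distrib, Finset.sum_ite_eq', Finset.mem_univ,
    if_true]
  simp only [Fin.ext_iff, Fin.val_succ, Fin.val_castSucc]
  split_ifs <;> first | omega | norm_num

theorem diffMatrix_mulVec_zero {n : ℕ} (z : Fin (n + 1) → ℝ) :
    (diffMatrix (n + 1) *ᵥ z) 0 = z 0 := by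
  simp [diffMatrix, mulVec, dotProduct, ite_mul, eq_comm (a := (0 : Fin (n + 2))),
    Fin.succ_ne_zero]

theorem diffMatrix_mulVec_succ_castSucc {n : ℕ} (z : Fin (n + 1) → ℝ) (i : Fin n) :
    (diffMatrix (n + 1) *ᵥ z) i.succ.castSucc = z i.succ - z i.castSucc := by
  have hsucc (x : Fin (n + 1)) : i.succ.castSucc = x.succ ↔ x = i.castSucc := by
    rw [← Fin.succ_castSucc, Fin.succ_inj, eq_comm]
  simp [diffMatrix, mulVec, dotProduct, sub_mul, ite_mul, -Fin.castSucc_succ, hsucc]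

theorem diffMatrix_mulVec_injective (n : ℕ) : Function.Injective (diffMatrix n).mulVec := by
  refine (injective_iff_map_eq_zero (diffMatrix n).mulVecLin).2 fun z hz => ?_
  cases n with
  | zero => exact Subsingleton.elim _ _
  | succ n =>
    have hrow (k : Fin (n + 2)) : (diffMatrix (n + 1) *ᵥ z) k = 0 := congrFun hz k
    funext i
    induction i using Fin.induction with
    | zero => simpa [diffMatrix_mulVec_zero] using hrow 0
    | succ i ih =>
      have hi := hrow i.succ.castSucc
      rw [diffMatrix_mulVec_succ_castSucc] at hi
      simpa [ih] using hi

theorem mulVec_diffMatrix_mul_diagonal_injective {n : ℕ} {d : Fin n → ℝ} (hd : ∀ i, d i ≠ 0) :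
    Function.Injective (diffMatrix n * diagonal d).mulVec := by
  have hD : Function.Injective (diagonal d).mulVec :=
    mulVec_injective_iff_isUnit.2 (isUnit_diagonal.2 (Pi.isUnit_iff.2 fun i => (hd i).isUnit))
  have hcomp : (diffMatrix n * diagonal d).mulVec = (diffMatrix n).mulVec ∘ (diagonal d).mulVec :=
    funext fun x => (mulVec_mulVec x _ _).symm
  rw [hcomp]
  exact (diffMatrix_mulVec_injective n).comp hD

section Tridiagonal

variable {n : ℕ} {d : Fin n → ℝ} {M : Matrix (Fin n) (Fin n) ℝ}

theorem tridiagonal_eq_smul_conjTranspose_mul_self (hdiag : ∀ i, M i i = d i ^ 2)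
    (hoff : ∀ i j : Fin n, (i : ℕ) + 1 = j → M i j = -(d i * d j) / 2 ∧ M j i = -(d i * d j) / 2)
    (hfar : ∀ i j : Fin n, (i : ℕ) + 2 ≤ j ∨ (j : ℕ) + 2 ≤ i → M i j = 0) :
    M = (2⁻¹ : ℝ) • ((diffMatrix n * diagonal d)ᴴ * (diffMatrix n * diagonal d)) := by
  ext i j
  have hgram : ((diffMatrix n * diagonal d)ᴴ * (diffMatrix n * diagonal d)) i j =
      d i * ((diffMatrix n)ᴴ * diffMatrix n) i j * d j := by
    rw [conjTranspose_mul, diagonal_conjTranspose, star_trivial, ← Matrix.mul_assoc, mul_diagonal,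
      Matrix.mul_assoc, diagonal_mul]
  rw [Matrix.smul_apply, hgram, diffMatrix_conjTranspose_mul_self_apply, smul_eq_mul]
  obtain rfl | hij := eq_or_ne i j
  · rw [if_pos rfl, hdiag]
    ring
  obtain hadj | hadj | hfar' : (i : ℕ) + 1 = j ∨ (j : ℕ) + 1 = i ∨
      ((i : ℕ) + 2 ≤ j ∨ (j : ℕ) + 2 ≤ i) := by
    have : (i : ℕ) ≠ j := Fin.val_ne_of_ne hij
    omega
  · rw [if_neg hij, if_pos (Or.inl hadj), (hoff i j hadj).1]
    ring
  · rw [if_neg hij, if_pos (Or.inr hadj), (hoff j i hadj).2]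
    ring
  · have hnadj : ¬((i : ℕ) + 1 = j ∨ (j : ℕ) + 1 = i) := by omega
    rw [if_neg hij, if_neg hnadj, hfar i j hfar']
    ring

theorem posDef_of_tridiagonal (hd : ∀ i, d i ≠ 0) (hdiag : ∀ i, M i i = d i ^ 2)
    (hoff : ∀ i j : Fin n, (i : ℕ) + 1 = j → M i j = -(d i * d j) / 2 ∧ M j i = -(d i * d j) / 2)
    (hfar : ∀ i j : Fin n, (i : ℕ) + 2 ≤ j ∨ (j : ℕ) + 2 ≤ i → M i j = 0) :
    M.PosDef := by
  rw [tridiagonal_eq_smul_conjTranspose_mul_self hdiag hoff hfar]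
  exact (PosDef.conjTranspose_mul_self _ (mulVec_diffMatrix_mul_diagonal_injective hd)).smul
    (by norm_num)

end Tridiagonal

theorem tridiagonal_smoothness_matrix_posDef_general
    (n : ℕ) (a : Fin n → ℝ) (ha : ∀ i, a i ≠ 0)
    (Δ : ℝ) (hΔ : Δ ≠ 0) (M : Matrix (Fin n) (Fin n) ℝ)
    (hdiag : ∀ i : Fin n, M i i = 1 / (Δ ^ 2 * (a i) ^ 2))
    (hoff : ∀ i j : Fin n, (i : ℕ) + 1 = (j : ℕ) →
      M i j = -1 / (2 * Δ ^ 2 * a i * a j) ∧ M j i = -1 / (2 * Δ ^ 2 * a i * a j))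
    (hfar : ∀ i j : Fin n, (i : ℕ) + 2 ≤ (j : ℕ) ∨ (j : ℕ) + 2 ≤ (i : ℕ) → M i j = 0) :
    ∀ x : Fin n → ℝ, x ≠ 0 → 0 < x ⬝ᵥ M.mulVec x := by
  intro x hx
  have hM : M.PosDef := by
    refine posDef_of_tridiagonal (d := fun i => (Δ * a i)⁻¹)
      (fun i => inv_ne_zero (mul_ne_zero hΔ (ha i))) (fun i => ?_) (fun i j hij => ?_) hfar
    · rw [hdiag]
      ring
    · rw [(hoff i j hij).1, (hoff i j hij).2]
      constructor <;> ring
  simpa using hM.dotProduct_mulVec_pos hx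

/-- The symmetric tridiagonal matrix with diagonal entries
`1/(Δ² aᵢ²)`, off-diagonal entries `−1/(2 Δ² aᵢ aᵢ₊₁)`, and zero entries at distance
`≥ 2` from the diagonal (with all `aᵢ ≠ 0` and `Δ ≠ 0`) is positive definite:
`xᵀ M x > 0` for every nonzero `x ∈ ℝⁿ`. -/
theorem tridiagonal_smoothness_matrix_posDef
    (n : ℕ) (hn : 1 ≤ n) (a : Fin n → ℝ) (ha : ∀ i, a i ≠ 0)
    (Δ : ℝ) (hΔ : Δ ≠ 0) (M : Matrix (Fin n) (Fin n) ℝ)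
    (hdiag : ∀ i : Fin n, M i i = 1 / (Δ ^ 2 * (a i) ^ 2))
    (hoff : ∀ i j : Fin n, (i : ℕ) + 1 = (j : ℕ) →
      M i j = -1 / (2 * Δ ^ 2 * a i * a j) ∧ M j i = -1 / (2 * Δ ^ 2 * a i * a j))
    (hfar : ∀ i j : Fin n, (i : ℕ) + 2 ≤ (j : ℕ) ∨ (j : ℕ) + 2 ≤ (i : ℕ) → M i j = 0) :
    ∀ x : Fin n → ℝ, x ≠ 0 → 0 < x ⬝ᵥ M.mulVec x :=
  tridiagonal_smoothness_matrix_posDef_general n a ha Δ hΔ M hdiag hoff hfar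
end

section
/- Let n = m·k with m, k ≥ 1, index travel-times by i ∈ Fin n and assign index i to block blk(i) = ⌊i/k⌋ ∈ Fin m. Let ω : Fin n → ℝ, a : Fin n → ℝ, σ : Fin m → ℝ all have nonzero values, and let Δ ≠ 0. Define Q = Q₁ + Q₂ + Q₃, where Q₁ is diagonal with (Q₁)_{ii} = 1/ω_i²; Q₂ is tridiagonal with (Q₂)_{ii} = 1/(Δ²·a_i²), (Q₂)_{i,i+1} = (Q₂)_{i+1,i} = −1/(2·Δ²·a_i·a_{i+1}), and 0 elsewhere; and (Q₃)_{i,i'} = 1/σ_{blk(i)}² if blk(i) = blk(i') and 0 otherwise. Then Q is positive definite, and consequently for any c ∈ ℝⁿ the quadratic-programming objective x ↦ (1/2)·xᵀQx + cᵀx is (strictly) convex on ℝⁿ. -/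
/-!
`Q₁` is diagonal with positive entries, so it suffices that `Q₂` and `Q₃` are positive
semidefinite. With `D = diag (1 / (Δ aᵢ))` one has `Q₂ = ½ D (2I - A) D`, where `A` is the
adjacency matrix of the path graph; every vertex of the path has degree at most `2`, so `2I - A`
is the graph Laplacian plus a nonnegative diagonal. `Q₃ = Pᵀ diag (1 / σ²) P` for the 0/1 matrix
`P` recording which block each segment lies in. Strict convexity of the objective then follows from
`a f x + b f y - f (a x + b y) = a b (x - y)ᵀ Q (x - y)` for `a + b = 1`.
-/

open Matrix Finset

namespace SimpleGraph

instance {n : ℕ} : DecidableRel (pathGraph n).Adj :=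
  fun _ _ => decidable_of_iff' _ pathGraph_adj

theorem pathGraph_degree_le_two {n : ℕ} (v : Fin n) : (pathGraph n).degree v ≤ 2 :=
  calc (pathGraph n).degree v ≤ ({(v : ℕ) + 1, (v : ℕ) - 1} : Finset ℕ).card := by
        rw [← card_neighborFinset_eq_degree]
        refine Finset.card_le_card_of_injOn Fin.val (fun j hj => ?_) Fin.val_injective.injOn
        simp only [mem_coe, mem_neighborFinset, pathGraph_adj, mem_insert, mem_singleton] at hj ⊢
        omega
    _ ≤ 2 := Finset.card_le_two

variable {V : Type*} [Fintype V] [DecidableEq V] (G : SimpleGraph V) [DecidableRel G.Adj]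

theorem posSemidef_natCast_smul_one_sub_adjMatrix {d : ℕ} (hd : ∀ v, G.degree v ≤ d) :
    ((d : ℝ) • (1 : Matrix V V ℝ) - G.adjMatrix ℝ).PosSemidef := by
  have hsplit : (d : ℝ) • (1 : Matrix V V ℝ) - G.adjMatrix ℝ
      = diagonal (fun v => (d : ℝ) - G.degree v) + G.lapMatrix ℝ := by
    rw [lapMatrix, degMatrix, ← add_sub_assoc, diagonal_add]
    ext i j
    by_cases h : i = j <;> simp [one_apply, h]
  rw [hsplit]
  refine PosSemidef.add (PosSemidef.diagonal fun v => ?_) (posSemidef_lapMatrix ℝ G)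
  simpa using hd v

end SimpleGraph

namespace Matrix

variable {ι κ R : Type*} [Fintype ι]

theorem posSemidef_ite_comp_eq [Fintype κ] [DecidableEq κ] [CommRing R] [PartialOrder R]
    [StarRing R] [StarOrderedRing R] [TrivialStar R] (f : ι → κ) {w : κ → R} (hw : 0 ≤ w) :
    (of fun i j => if f i = f j then w (f i) else 0 : Matrix ι ι R).PosSemidef := by
  let P : Matrix κ ι R := of fun b i => if f i = b then 1 else 0
  have hfactor : (of fun i j => if f i = f j then w (f i) else 0 : Matrix ι ι R)
      = Pᴴ * diagonal w * P := by
    ext i j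
    by_cases h : f i = f j <;> simp [P, mul_apply, diagonal, eq_comm, h]
  rw [hfactor]
  exact (PosSemidef.diagonal hw).conjTranspose_mul_mul_same P

theorem dotProduct_mulVec_smul_add_smul [CommRing R] (Q : Matrix ι ι R) (x y : ι → R) {a b : R}
    (hab : a + b = 1) :
    a * (x ⬝ᵥ Q *ᵥ x) + b * (y ⬝ᵥ Q *ᵥ y) - (a • x + b • y) ⬝ᵥ Q *ᵥ (a • x + b • y)
      = a * b * ((x - y) ⬝ᵥ Q *ᵥ (x - y)) := by
  obtain rfl : b = 1 - a := by rw [← hab]; ring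
  simp only [mulVec_add, mulVec_sub, mulVec_smul, dotProduct_add, dotProduct_sub, add_dotProduct,
    sub_dotProduct, dotProduct_smul, smul_dotProduct, smul_eq_mul]
  ring

theorem PosDef.strictConvexOn_dotProduct_mulVec {Q : Matrix ι ι ℝ} (hQ : Q.PosDef) :
    StrictConvexOn ℝ Set.univ fun x => x ⬝ᵥ Q *ᵥ x := by
  refine ⟨convex_univ, fun x _ y _ hxy a b ha hb hab => ?_⟩
  have hpos := hQ.dotProduct_mulVec_pos (sub_ne_zero.mpr hxy)
  rw [star_trivial] at hpos
  have := dotProduct_mulVec_smul_add_smul Q x y hab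
  simp only [smul_eq_mul]
  nlinarith [mul_pos (mul_pos ha hb) hpos]

theorem PosDef.strictConvexOn_half_dotProduct_mulVec_add {Q : Matrix ι ι ℝ} (hQ : Q.PosDef)
    (c : ι → ℝ) :
    StrictConvexOn ℝ Set.univ fun x => (1 / 2) * (x ⬝ᵥ Q *ᵥ x) + c ⬝ᵥ x := by
  have hhalf := (hQ.smul (one_half_pos (α := ℝ))).strictConvexOn_dotProduct_mulVec
  refine (hhalf.add_convexOn ((dotProductBilin ℝ ℝ c).convexOn convex_univ)).congr fun x _ => ?_
  simp [smul_mulVec, dotProductBilin]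

end Matrix

open SimpleGraph in
theorem posSemidef_of_speedSmoothness_entries {n : ℕ} (Δ : ℝ) (a : Fin n → ℝ)
    (Q2 : Matrix (Fin n) (Fin n) ℝ) (hdiag : ∀ i, Q2 i i = 1 / (Δ ^ 2 * (a i) ^ 2))
    (hoff : ∀ i j : Fin n, (i : ℕ) + 1 = (j : ℕ) →
      Q2 i j = -1 / (2 * Δ ^ 2 * a i * a j) ∧ Q2 j i = -1 / (2 * Δ ^ 2 * a i * a j))
    (hfar : ∀ i j : Fin n, (i : ℕ) + 2 ≤ (j : ℕ) ∨ (j : ℕ) + 2 ≤ (i : ℕ) → Q2 i j = 0) :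
    Q2.PosSemidef := by
  let D : Matrix (Fin n) (Fin n) ℝ := diagonal fun i => (Δ * a i)⁻¹
  have hfactor : Q2 = (1 / 2 : ℝ) • (Dᴴ * ((2 : ℝ) • 1 - (pathGraph n).adjMatrix ℝ) * D) := by
    ext i j
    simp only [D, conjTranspose_eq_transpose_of_trivial, diagonal_transpose, Matrix.smul_apply,
      mul_diagonal, diagonal_mul, Matrix.sub_apply, one_apply, adjMatrix_apply, pathGraph_adj,
      smul_eq_mul, mul_ite, mul_one, mul_zero]
    rcases eq_or_ne i j with rfl | hne
    · rw [hdiag, if_pos rfl, if_neg (by omega)]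
      ring
    have hval : (i : ℕ) ≠ j := Fin.val_injective.ne hne
    rcases (by omega : (i : ℕ) + 1 = j ∨ (j : ℕ) + 1 = i ∨ ((i : ℕ) + 2 ≤ j ∨ (j : ℕ) + 2 ≤ i))
      with hadj | hadj | hfar'
    · rw [(hoff i j hadj).1, if_neg hne, if_pos (.inl hadj)]
      ring
    · rw [(hoff j i hadj).2, if_neg hne, if_pos (.inr hadj)]
      ring
    · rw [hfar i j hfar', if_neg hne, if_neg (by omega)]
      ring
  rw [hfactor]
  refine PosSemidef.smul ?_ one_half_pos.le
  refine PosSemidef.conjTranspose_mul_mul_same ?_ D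
  simpa using posSemidef_natCast_smul_one_sub_adjMatrix (pathGraph n) pathGraph_degree_le_two

theorem ontrac_qp_matrix_posDef_and_objective_strictConvex_general
    (m k : ℕ)
    (blk : Fin (m * k) → Fin m)
    (ω : Fin (m * k) → ℝ) (hω : ∀ i, ω i ≠ 0)
    (a : Fin (m * k) → ℝ)
    (σ : Fin m → ℝ)
    (Δ : ℝ)
    (Q1 Q2 Q3 Q : Matrix (Fin (m * k)) (Fin (m * k)) ℝ)
    (hQ1 : ∀ i j : Fin (m * k), Q1 i j = if i = j then 1 / (ω i) ^ 2 else 0)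
    (hQ2diag : ∀ i : Fin (m * k), Q2 i i = 1 / (Δ ^ 2 * (a i) ^ 2))
    (hQ2off : ∀ i j : Fin (m * k), (i : ℕ) + 1 = (j : ℕ) →
      Q2 i j = -1 / (2 * Δ ^ 2 * a i * a j) ∧ Q2 j i = -1 / (2 * Δ ^ 2 * a i * a j))
    (hQ2far : ∀ i j : Fin (m * k),
      (i : ℕ) + 2 ≤ (j : ℕ) ∨ (j : ℕ) + 2 ≤ (i : ℕ) → Q2 i j = 0)
    (hQ3 : ∀ i i' : Fin (m * k),
      Q3 i i' = if blk i = blk i' then 1 / (σ (blk i)) ^ 2 else 0)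
    (hQ : Q = Q1 + Q2 + Q3) :
    Q.PosDef ∧
    ∀ c : Fin (m * k) → ℝ,
      StrictConvexOn ℝ Set.univ
        (fun x : Fin (m * k) → ℝ => (1 / 2) * (x ⬝ᵥ Q.mulVec x) + c ⬝ᵥ x) := by
  have hQ1_eq : Q1 = diagonal fun i => 1 / ω i ^ 2 := by
    ext i j
    rw [hQ1, diagonal_apply]
  have hQ3_eq : Q3 = of fun i j => if blk i = blk j then 1 / σ (blk i) ^ 2 else 0 := by
    ext i j
    rw [hQ3, of_apply]
  have hQ1_posDef : Q1.PosDef :=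
    hQ1_eq ▸ posDef_diagonal_iff.2 fun i => by have := hω i; positivity
  have hQ2_posSemidef : Q2.PosSemidef :=
    posSemidef_of_speedSmoothness_entries Δ a Q2 hQ2diag hQ2off hQ2far
  have hQ3_posSemidef : Q3.PosSemidef :=
    hQ3_eq ▸ posSemidef_ite_comp_eq blk (w := fun b => 1 / σ b ^ 2) fun b => by positivity
  have hQ_posDef : Q.PosDef :=
    hQ ▸ (hQ1_posDef.add_posSemidef hQ2_posSemidef).add_posSemidef hQ3_posSemidef
  exact ⟨hQ_posDef, hQ_posDef.strictConvexOn_half_dotProduct_mulVec_add⟩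

/-- The paper's Theorem 3: with `n = m·k` travel-times, block map
`blk i = ⌊i/k⌋`, nonzero `ω`, `a`, `σ`, `Δ`, the matrix `Q = Q₁ + Q₂ + Q₃` of the
maximum-likelihood quadratic program (diagonal `Q₁` with entries `1/ωᵢ²`, tridiagonal
smoothness matrix `Q₂`, and block-constant GPS matrix `Q₃`) is positive definite, and
consequently the QP objective `x ↦ (1/2) xᵀQx + cᵀx` is strictly convex on `ℝⁿ`. -/
theorem ontrac_qp_matrix_posDef_and_objective_strictConvex
    (m k : ℕ) (hm : 1 ≤ m) (hk : 1 ≤ k)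
    (blk : Fin (m * k) → Fin m) (hblk : ∀ i : Fin (m * k), (blk i : ℕ) = (i : ℕ) / k)
    (ω : Fin (m * k) → ℝ) (hω : ∀ i, ω i ≠ 0)
    (a : Fin (m * k) → ℝ) (ha : ∀ i, a i ≠ 0)
    (σ : Fin m → ℝ) (hσ : ∀ j, σ j ≠ 0)
    (Δ : ℝ) (hΔ : Δ ≠ 0)
    (Q1 Q2 Q3 Q : Matrix (Fin (m * k)) (Fin (m * k)) ℝ)
    (hQ1 : ∀ i j : Fin (m * k), Q1 i j = if i = j then 1 / (ω i) ^ 2 else 0)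
    (hQ2diag : ∀ i : Fin (m * k), Q2 i i = 1 / (Δ ^ 2 * (a i) ^ 2))
    (hQ2off : ∀ i j : Fin (m * k), (i : ℕ) + 1 = (j : ℕ) →
      Q2 i j = -1 / (2 * Δ ^ 2 * a i * a j) ∧ Q2 j i = -1 / (2 * Δ ^ 2 * a i * a j))
    (hQ2far : ∀ i j : Fin (m * k),
      (i : ℕ) + 2 ≤ (j : ℕ) ∨ (j : ℕ) + 2 ≤ (i : ℕ) → Q2 i j = 0)
    (hQ3 : ∀ i i' : Fin (m * k),
      Q3 i i' = if blk i = blk i' then 1 / (σ (blk i)) ^ 2 else 0)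
    (hQ : Q = Q1 + Q2 + Q3) :
    Q.PosDef ∧
    ∀ c : Fin (m * k) → ℝ,
      StrictConvexOn ℝ Set.univ
        (fun x : Fin (m * k) → ℝ => (1 / 2) * (x ⬝ᵥ Q.mulVec x) + c ⬝ᵥ x) :=
  ontrac_qp_matrix_posDef_and_objective_strictConvex_general m k blk ω hω a σ Δ Q1 Q2 Q3 Q hQ1
    hQ2diag hQ2off hQ2far hQ3 hQ
end
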